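/- Let f belong to (an equivalence class in) L^1(P̃_X), let 𝒫 = {S_1,…,S_m} partition N, and let g be a coalitional value of two-coefficient form whose coefficient families are nonnegative and each sum to one. Then for P_X-almost every x* ∈ ℝ^n and every i ∈ S_j, S_j ∈ 𝒫, the marginal coalitional value is well-defined and admits the representation g_i[N, v^{ME}(·; x*, X, f), 𝒫] = ∫ Δ_i(A, T, x; x*, f) [P_j^{(g,𝒫)} ⊗ P_i^{(g,S_j)} ⊗ P_X](dA, dT, dx). -/

import Mathlib

open MeasureTheory ProbabilityTheory ENNReal Filter Finset

noncomputable section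

/-- Discrete σ-algebra on the (finite) space of coalitions. -/
instance {k : ℕ} : MeasurableSpace (Finset (Fin k)) := ⊤

/-- `merge n S y x` is the vector in `ℝ^n` agreeing with `y` on `S` and with `x` on `N∖S`,
i.e. the vector `(y_S, x_{-S})`. -/
def merge (n : ℕ) (S : Finset (Fin n)) (y x : Fin n → ℝ) : Fin n → ℝ :=
  fun i => if i ∈ S then y i else x i

/-- The product measure `P_{X_S} ⊗ P_{X_{-S}}` viewed as a measure on `ℝ^n`
(obtained by merging two independent copies along `S`). -/
def prodPart (n : ℕ) (P : Measure (Fin n → ℝ)) (S : Finset (Fin n)) :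
    Measure (Fin n → ℝ) :=
  (P.prod P).map (fun q => merge n S q.1 q.2)

/-- The mixture measure `P̃_X = 2^{-n} ∑_{S ⊆ N} P_{X_S} ⊗ P_{X_{-S}}` on `ℝ^n`. -/
def tildeP (n : ℕ) (P : Measure (Fin n → ℝ)) : Measure (Fin n → ℝ) :=
  ((2 : ℝ≥0∞) ^ n)⁻¹ • ∑ S : Finset (Fin n), prodPart n P S

/-- The marginal game `v^{ME}(S; x*, X, f) = E[f(x*_S, X_{-S})]`. -/
def vME (n : ℕ) (P : Measure (Fin n → ℝ)) (f : (Fin n → ℝ) → ℝ)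
    (xs : Fin n → ℝ) (S : Finset (Fin n)) : ℝ :=
  ∫ x, f (merge n S xs x) ∂P

/-- A linear game value `h_i[N,v] = ∑_{S ⊆ N∖{i}} w(S) (v(S∪{i}) - v(S))`. -/
def gameValue (n : ℕ) (w : Finset (Fin n) → ℝ) (i : Fin n)
    (v : Finset (Fin n) → ℝ) : ℝ :=
  ∑ S ∈ (univ.erase i).powerset, w S * (v (insert i S) - v S)

/-- The discrete measure on subsets of `D` assigning mass `w T` to each `T ⊆ D`.
For `D = N∖{i}` and nonnegative weights summing to one this is `P_i^{(h)}`. -/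
def subsetMeasure (k : ℕ) (D : Finset (Fin k)) (w : Finset (Fin k) → ℝ) :
    Measure (Finset (Fin k)) :=
  ∑ T ∈ D.powerset, (ENNReal.ofReal (w T)) • Measure.dirac T

/-- `Δ_i(S, x; x*, f) = f(x*_{S∪{i}}, x_{-(S∪{i})}) - f(x*_S, x_{-S})`. -/
def deltaFun (n : ℕ) (f : (Fin n → ℝ) → ℝ) (i : Fin n) (xs : Fin n → ℝ) :
    Finset (Fin n) × (Fin n → ℝ) → ℝ :=
  fun q => f (merge n (insert i q.1) xs q.2) - f (merge n q.1 xs q.2)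

/-- The union `Q_A = ∪_{α ∈ A} S_α` of the groups indexed by `A ⊆ M`. -/
def qUnion (n m : ℕ) (Pt : Fin m → Finset (Fin n)) (A : Finset (Fin m)) :
    Finset (Fin n) :=
  A.biUnion Pt

/-- `Δ_j(A, x; x*, f) = f(x*_{Q_{A∪{j}}}, x_{-Q_{A∪{j}}}) − f(x*_{Q_A}, x_{-Q_A})`
for a partition `Pt = {S_1,…,S_m}` of `N`. -/
def qDelta (n m : ℕ) (Pt : Fin m → Finset (Fin n)) (f : (Fin n → ℝ) → ℝ)
    (j : Fin m) (xs : Fin n → ℝ) : Finset (Fin m) × (Fin n → ℝ) → ℝ :=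
  fun q => f (merge n (qUnion n m Pt (insert j q.1)) xs q.2)
    - f (merge n (qUnion n m Pt q.1) xs q.2)

/-- A coalitional value of two-coefficient form:
`g_i[N, v, 𝒫] = ∑_{A⊆M∖{j}} ∑_{T⊆S_j∖{i}} w¹_j(A,M) w²_i(T,S_j)
  [v(Q_A ∪ T ∪ {i}) − v(Q_A ∪ T)]` for `i ∈ S_j`. -/
def coalVal (n m : ℕ) (Pt : Fin m → Finset (Fin n)) (j : Fin m) (i : Fin n)
    (w1 : Finset (Fin m) → ℝ) (w2 : Finset (Fin n) → ℝ)
    (v : Finset (Fin n) → ℝ) : ℝ :=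
  ∑ A ∈ (univ.erase j).powerset, ∑ T ∈ ((Pt j).erase i).powerset,
    w1 A * w2 T *
      (v (insert i (qUnion n m Pt A ∪ T)) - v (qUnion n m Pt A ∪ T))

/-- `Δ_i(A, T, x; x*, f) = f(x*_{Q_A∪T∪{i}}, x_{-(Q_A∪T∪{i})}) − f(x*_{Q_A∪T}, x_{-(Q_A∪T)})`. -/
def cDelta (n m : ℕ) (Pt : Fin m → Finset (Fin n)) (f : (Fin n → ℝ) → ℝ)
    (i : Fin n) (xs : Fin n → ℝ) :
    Finset (Fin m) × (Finset (Fin n) × (Fin n → ℝ)) → ℝ :=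
  fun q => f (merge n (insert i (qUnion n m Pt q.1 ∪ q.2.1)) xs q.2.2)
    - f (merge n (qUnion n m Pt q.1 ∪ q.2.1) xs q.2.2)

/-!
Each component `P_{X_S} ⊗ P_{X_{-S}}` of `P̃_X` is the image of `P_X ⊗ P_X` under
`(x*, x) ↦ (x*_S, x_{-S})`, so `f ∈ L¹(P̃_X)` gives, by Fubini, integrability of
`x ↦ f(x*_S, x_{-S})` for `P_X`-almost every `x*`, simultaneously for the finitely many `S`.
For such `x*` both sides are finite sums: the coalition measures are finite combinations of
Dirac masses, so integrating against them is taking a weighted sum, and linearity of the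
integral turns the weighted increments of `v^{ME}` into the integral of `Δ_i`.
-/

instance {k : ℕ} : MeasurableSingletonClass (Finset (Fin k)) :=
  ⟨fun _ => MeasurableSpace.measurableSet_top⟩

section SubsetMeasure

variable {k : ℕ} {Y : Type*} [MeasurableSpace Y] (D : Finset (Fin k)) (w : Finset (Fin k) → ℝ)
  (ν : Measure Y) [SFinite ν]

theorem subsetMeasure_prod :
    (subsetMeasure k D w).prod ν
      = ∑ T ∈ D.powerset, ENNReal.ofReal (w T) • ν.map (Prod.mk T) := by
  ext s hs
  simp only [Measure.prod_apply hs, subsetMeasure, lintegral_finsetSum_measure,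
    Measure.finsetSum_apply, lintegral_smul_measure, lintegral_dirac, Measure.smul_apply,
    Measure.map_apply measurable_prodMk_left hs, smul_eq_mul]

theorem integrable_subsetMeasure_prod {h : Finset (Fin k) × Y → ℝ}
    (hint : ∀ T, Integrable (fun y => h (T, y)) ν) :
    Integrable h ((subsetMeasure k D w).prod ν) := by
  rw [subsetMeasure_prod, integrable_finsetSum_measure]
  exact fun T _ => (((measurableEmbedding_prodMk_left T).integrable_map_iff).mpr
    (hint T)).smul_measure ofReal_ne_top

theorem integral_subsetMeasure_prod (hw : ∀ T ∈ D.powerset, 0 ≤ w T)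
    {h : Finset (Fin k) × Y → ℝ} (hint : ∀ T, Integrable (fun y => h (T, y)) ν) :
    ∫ q, h q ∂((subsetMeasure k D w).prod ν) = ∑ T ∈ D.powerset, w T * ∫ y, h (T, y) ∂ν := by
  rw [subsetMeasure_prod, integral_finsetSum_measure fun T _ =>
    (((measurableEmbedding_prodMk_left T).integrable_map_iff).mpr
      (hint T)).smul_measure ofReal_ne_top]
  refine Finset.sum_congr rfl fun T hT => ?_
  rw [integral_smul_measure, (measurableEmbedding_prodMk_left T).integral_map,
    ENNReal.toReal_ofReal (hw T hT), smul_eq_mul]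

end SubsetMeasure

theorem measurable_merge (n : ℕ) (S : Finset (Fin n)) :
    Measurable fun q : (Fin n → ℝ) × (Fin n → ℝ) => merge n S q.1 q.2 := by
  refine measurable_pi_lambda _ fun a => ?_
  by_cases h : a ∈ S
  · simpa only [merge, h, if_true] using measurable_fst.eval
  · simpa only [merge, h, if_false] using measurable_snd.eval

theorem integrable_prodPart_of_tildeP {n : ℕ} {P : Measure (Fin n → ℝ)} {f : (Fin n → ℝ) → ℝ}
    (hf : Integrable f (tildeP n P)) (S : Finset (Fin n)) : Integrable f (prodPart n P S) := by
  rw [tildeP, integrable_smul_measure (by simp) (by simp), integrable_finsetSum_measure] at hf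
  exact hf S (mem_univ S)

theorem ae_integrable_merge {n : ℕ} {P : Measure (Fin n → ℝ)} [SFinite P]
    {f : (Fin n → ℝ) → ℝ} (hf : Integrable f (tildeP n P)) :
    ∀ᵐ xs ∂P, ∀ S : Finset (Fin n), Integrable (fun x => f (merge n S xs x)) P := by
  refine ae_all_iff.mpr fun S => ?_
  have hS := integrable_prodPart_of_tildeP hf S
  rw [prodPart, integrable_map_measure hS.aestronglyMeasurable
    (measurable_merge n S).aemeasurable] at hS
  exact hS.prod_right_ae

theorem coalVal_vME_eq_integral (n m : ℕ) (P : Measure (Fin n → ℝ)) [SFinite P]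
    (f : (Fin n → ℝ) → ℝ) (Pt : Fin m → Finset (Fin n)) (j : Fin m) (i : Fin n)
    (w1 : Finset (Fin m) → ℝ) (w2 : Finset (Fin n) → ℝ)
    (hw10 : ∀ A ∈ (univ.erase j).powerset, 0 ≤ w1 A)
    (hw20 : ∀ T ∈ ((Pt j).erase i).powerset, 0 ≤ w2 T) (xs : Fin n → ℝ)
    (hxs : ∀ S : Finset (Fin n), Integrable (fun x => f (merge n S xs x)) P) :
    coalVal n m Pt j i w1 w2 (vME n P f xs) =
      ∫ q, cDelta n m Pt f i xs q
        ∂((subsetMeasure m (univ.erase j) w1).prod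
            ((subsetMeasure n ((Pt j).erase i) w2).prod P)) := by
  have hΔ : ∀ A T, Integrable (fun x => cDelta n m Pt f i xs (A, (T, x))) P :=
    fun A T => (hxs (insert i (qUnion n m Pt A ∪ T))).sub (hxs (qUnion n m Pt A ∪ T))
  rw [integral_subsetMeasure_prod _ _ _ hw10 fun A =>
    integrable_subsetMeasure_prod _ _ _ (hΔ A)]
  refine Finset.sum_congr rfl fun A _ => ?_
  rw [integral_subsetMeasure_prod _ _ _ hw20 (hΔ A), Finset.mul_sum]
  refine Finset.sum_congr rfl fun T _ => ?_
  rw [mul_assoc, vME, vME, ← integral_sub (hxs _) (hxs _)]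
  rfl

theorem stmt13_general (n m : ℕ) (P : Measure (Fin n → ℝ)) [IsProbabilityMeasure P]
    (f : (Fin n → ℝ) → ℝ) (hf : MemLp f 1 (tildeP n P))
    (Pt : Fin m → Finset (Fin n))
    (j : Fin m) (i : Fin n)
    (w1 : Finset (Fin m) → ℝ) (w2 : Finset (Fin n) → ℝ)
    (hw10 : ∀ A ∈ (univ.erase j).powerset, 0 ≤ w1 A)
    (hw20 : ∀ T ∈ ((Pt j).erase i).powerset, 0 ≤ w2 T) :
    ∀ᵐ xs ∂P,
      (∀ S : Finset (Fin n), Integrable (fun x => f (merge n S xs x)) P) ∧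
      coalVal n m Pt j i w1 w2 (vME n P f xs) =
        ∫ q, cDelta n m Pt f i xs q
          ∂((subsetMeasure m (univ.erase j) w1).prod
              ((subsetMeasure n ((Pt j).erase i) w2).prod P)) := by
  filter_upwards [ae_integrable_merge (memLp_one_iff_integrable.mp hf)] with xs hxs
  exact ⟨hxs, coalVal_vME_eq_integral n m P f Pt j i w1 w2 hw10 hw20 xs hxs⟩

/-- Integral representation of the marginal coalitional value.
Let `f ∈ L¹(P̃_X)`, let `𝒫 = {S_1,…,S_m}` partition `N`, and let the coefficient
families be nonnegative and each sum to one. Then for `P_X`-almost every `x*` and every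
`i ∈ S_j`, `S_j ∈ 𝒫`, the marginal coalitional value is well-defined and
`g_i[N, v^{ME}(·; x*, X, f), 𝒫] = ∫ Δ_i(A, T, x; x*, f)
  [P_j^{(g,𝒫)} ⊗ P_i^{(g,S_j)} ⊗ P_X](dA, dT, dx)`. -/
theorem stmt13 (n m : ℕ) (P : Measure (Fin n → ℝ)) [IsProbabilityMeasure P]
    (f : (Fin n → ℝ) → ℝ) (hf : MemLp f 1 (tildeP n P))
    (Pt : Fin m → Finset (Fin n))
    (hPtne : ∀ j, (Pt j).Nonempty)
    (hPtdisj : ∀ j k, j ≠ k → Disjoint (Pt j) (Pt k))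
    (hPtcover : Finset.univ.biUnion Pt = (Finset.univ : Finset (Fin n)))
    (j : Fin m) (i : Fin n) (hi : i ∈ Pt j)
    (w1 : Finset (Fin m) → ℝ) (w2 : Finset (Fin n) → ℝ)
    (hw10 : ∀ A ∈ (univ.erase j).powerset, 0 ≤ w1 A)
    (hw11 : ∑ A ∈ (univ.erase j).powerset, w1 A = 1)
    (hw20 : ∀ T ∈ ((Pt j).erase i).powerset, 0 ≤ w2 T)
    (hw21 : ∑ T ∈ ((Pt j).erase i).powerset, w2 T = 1) :
    ∀ᵐ xs ∂P,
      (∀ S : Finset (Fin n), Integrable (fun x => f (merge n S xs x)) P) ∧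
      coalVal n m Pt j i w1 w2 (vME n P f xs) =
        ∫ q, cDelta n m Pt f i xs q
          ∂((subsetMeasure m (univ.erase j) w1).prod
              ((subsetMeasure n ((Pt j).erase i) w2).prod P)) :=
  stmt13_general n m P f hf Pt j i w1 w2 hw10 hw20
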